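/- arXiv:2105.05574 — 2 statements merged into one kernel-verified Lean document; each statement's English description precedes it below -/
import Mathlib

section
/- If a randomized algorithm A run with size parameter n₀ fails on every graph of at most n₀ nodes with probability at most 1/n₀^c per local neighborhood, its runtime t satisfies Δ^{1+t+r} ≤ n₀, and the output of each node is a function of its radius-t neighborhood, then on any graph G of maximum degree Δ (of arbitrary size), for each node v the probability that the radius-r neighborhood of v is labeled incorrectly is at most 1/n₀^c. -/
/-!
The ball of radius `R = t + r` around `v` has at most `1 + Δ + ⋯ + Δ^R < Δ^(R+1) ≤ n₀` nodes.
Relabelling it by `Fin n` gives a graph `G.comap j` with at most `n₀` nodes and maximum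
degree `Δ`, and by locality the failure event at `v` is the same event of the random bits
restricted to the ball. Restricting uniform random bits to the ball gives uniform bits, so the
failure probability at `v` equals the one on the small graph.
-/

/-- The `(t+r)`-ball of `v` in `G`. -/
def Ball {m : ℕ} (G : SimpleGraph (Fin m)) (v x : Fin m) (R : ℕ) : Prop :=
  ∃ p : G.Walk v x, p.length ≤ R

open Function Set

section Ball

variable {m : ℕ} {G : SimpleGraph (Fin m)}

lemma ball_refl (v : Fin m) (R : ℕ) : Ball G v v R := ⟨.nil, Nat.zero_le R⟩

lemma setOf_ball_zero (v : Fin m) : {x | Ball G v x 0} = {v} := by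
  ext x
  refine ⟨fun ⟨p, hp⟩ => (p.eq_of_length_eq_zero (Nat.le_zero.mp hp)).symm, ?_⟩
  rintro rfl
  exact ball_refl _ 0

lemma setOf_ball_succ_subset (v : Fin m) (R : ℕ) :
    {x | Ball G v x (R + 1)} ⊆
      insert v (⋃ w ∈ (G.neighborSet v).toFinite.toFinset, {x | Ball G w x R}) := by
  rintro x ⟨p, hp⟩
  cases p with
  | nil => exact mem_insert _ _
  | cons h q =>
    refine mem_insert_of_mem _ (mem_biUnion (by simpa using h) ⟨q, ?_⟩)
    simpa using hp

lemma ncard_ball_le_sum_pow {Δ : ℕ} (hdeg : ∀ v, (G.neighborSet v).ncard ≤ Δ) (v : Fin m)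
    (R : ℕ) : {x | Ball G v x R}.ncard ≤ ∑ k ∈ Finset.range (R + 1), Δ ^ k := by
  induction R generalizing v with
  | zero => simp [setOf_ball_zero]
  | succ R ih =>
    set N := (G.neighborSet v).toFinite.toFinset
    calc {x | Ball G v x (R + 1)}.ncard
        ≤ (⋃ w ∈ N, {x | Ball G w x R}).ncard + 1 :=
          (ncard_le_ncard (setOf_ball_succ_subset v R)).trans (ncard_insert_le _ _)
      _ ≤ ∑ w ∈ N, {x | Ball G w x R}.ncard + 1 := by
          gcongr; exact Finset.set_ncard_biUnion_le _ _
      _ ≤ N.card * ∑ k ∈ Finset.range (R + 1), Δ ^ k + 1 := by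
          gcongr; exact Finset.sum_le_card_nsmul _ _ _ fun w _ => ih w
      _ ≤ Δ * ∑ k ∈ Finset.range (R + 1), Δ ^ k + 1 := by
          gcongr; rw [← ncard_eq_toFinset_card]; exact hdeg v
      _ = ∑ k ∈ Finset.range (R + 2), Δ ^ k := by
          rw [Finset.sum_range_succ' _ (R + 1), Finset.mul_sum]; simp [pow_succ']

lemma ncard_ball_lt_pow {Δ : ℕ} (hΔ : 2 ≤ Δ) (hdeg : ∀ v, (G.neighborSet v).ncard ≤ Δ)
    (v : Fin m) (R : ℕ) : {x | Ball G v x R}.ncard < Δ ^ (R + 1) :=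
  (ncard_ball_le_sum_pow hdeg v R).trans_lt (Nat.geomSum_lt hΔ fun _ => Finset.mem_range.mp)

end Ball

lemma SimpleGraph.ncard_neighborSet_comap_le {V W : Type*} [Finite W] {G : SimpleGraph W}
    {f : V → W} (hf : Injective f) (a : V) :
    ((G.comap f).neighborSet a).ncard ≤ (G.neighborSet (f a)).ncard :=
  ncard_le_ncard_of_injOn f (fun _ h => h) hf.injOn

theorem card_subtype_comp_div_card {α ι B : Type*} [Fintype α] [DecidableEq α] [Fintype ι]
    [DecidableEq ι] [Fintype B] [Nonempty B] {j : ι → α} (hj : Injective j)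
    (P : (ι → B) → Prop) :
    (Nat.card {f : α → B // P (f ∘ j)} : ℝ) / Fintype.card (α → B) =
      Nat.card {g : ι → B // P g} / Fintype.card (ι → B) := by
  classical
  let F : (α → B) ≃ (ι → B) × ({x // x ∉ range j} → B) :=
    (Equiv.piEquivPiSubtypeProd (· ∈ range j) fun _ => B).trans
      (Equiv.prodCongrLeft fun _ => (Equiv.ofInjective j hj).symm.arrowCongr (Equiv.refl B))
  have hF : ∀ f, (F f).1 = f ∘ j := fun _ => rfl
  have hcount : Nat.card {f : α → B // P (f ∘ j)} =
      Nat.card {g : ι → B // P g} * Nat.card ({x // x ∉ range j} → B) := by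
    rw [← Nat.card_prod, Nat.card_congr ((F.subtypeEquiv fun f => by rw [hF]).trans
      (Equiv.prodSubtypeFstEquivSubtypeProd (p := P)))]
  have htotal : Fintype.card (α → B) =
      Fintype.card (ι → B) * Nat.card ({x // x ∉ range j} → B) := by
    rw [Fintype.card_congr F, Fintype.card_prod, Nat.card_eq_fintype_card]
  have hpos : (0 : ℝ) < Nat.card ({x // x ∉ range j} → B) := by
    exact_mod_cast Nat.card_pos
  rw [hcount, htotal]
  push_cast
  exact mul_div_mul_right _ _ hpos.ne'

def IsBallLocal {B : Type} (R : ℕ)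
    (Fail : ∀ m : ℕ, SimpleGraph (Fin m) → (Fin m → B) → Fin m → Prop) : Prop :=
  ∀ (m m' : ℕ) (G : SimpleGraph (Fin m)) (G' : SimpleGraph (Fin m'))
    (φ : Fin m → Fin m') (v : Fin m) (rb : Fin m → B) (rb' : Fin m' → B),
    (∀ x y : Fin m, Ball G v x R → Ball G v y R →
        ((G.Adj x y ↔ G'.Adj (φ x) (φ y)) ∧ (φ x = φ y → x = y))) →
    (∀ x, Ball G v x R → rb' (φ x) = rb x) →
    (∀ x' : Fin m', Ball G' (φ v) x' R → ∃ x, Ball G v x R ∧ φ x = x') →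
    (Fail m G rb v ↔ Fail m' G' rb' (φ v))

theorem IsBallLocal.fail_iff_comap {B : Type} {R : ℕ}
    {Fail : ∀ m : ℕ, SimpleGraph (Fin m) → (Fin m → B) → Fin m → Prop}
    (hFail : IsBallLocal R Fail)
    {m n : ℕ} {G : SimpleGraph (Fin m)} {v : Fin m} {j : Fin n → Fin m} {φ : Fin m → Fin n}
    (hφ : LeftInverse φ j) (hj : range j = {x | Ball G v x R}) (rb : Fin m → B) :
    Fail m G rb v ↔ Fail n (G.comap j) (rb ∘ j) (φ v) := by
  have hjφ : ∀ x, Ball G v x R → j (φ x) = x := by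
    intro x hx
    obtain ⟨a, rfl⟩ : x ∈ range j := hj ▸ hx
    rw [hφ a]
  refine hFail m n G (G.comap j) φ v rb (rb ∘ j) ?_ ?_ ?_
  · intro x y hx hy
    refine ⟨by simp only [SimpleGraph.comap_adj, hjφ x hx, hjφ y hy], fun h => ?_⟩
    rw [← hjφ x hx, ← hjφ y hy, h]
  · intro x hx
    simp only [comp_apply, hjφ x hx]
  · intro a _
    exact ⟨j a, hj.subset (mem_range_self a), hφ a⟩

theorem local_failure_probability_transfer_general
    (Δ r t c n₀ : ℕ) (hΔ : 2 ≤ Δ)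
    (hsize : Δ ^ (1 + t + r) ≤ n₀)
    (B : Type) [Fintype B] [Nonempty B]
    (Fail : ∀ m : ℕ, SimpleGraph (Fin m) → (Fin m → B) → Fin m → Prop)
    -- locality: the failure event at `v` only depends on the radius-`(t+r)` neighborhood
    -- of `v` (graph structure and random bits), up to embeddings of that neighborhood
    (hlocal : ∀ (m m' : ℕ) (G : SimpleGraph (Fin m)) (G' : SimpleGraph (Fin m'))
        (φ : Fin m → Fin m') (v : Fin m) (rb : Fin m → B) (rb' : Fin m' → B),
        (∀ x y : Fin m, Ball G v x (t + r) → Ball G v y (t + r) →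
            ((G.Adj x y ↔ G'.Adj (φ x) (φ y)) ∧ (φ x = φ y → x = y))) →
        (∀ x, Ball G v x (t + r) → rb' (φ x) = rb x) →
        (∀ x' : Fin m', Ball G' (φ v) x' (t + r) →
            ∃ x, Ball G v x (t + r) ∧ φ x = x') →
        (Fail m G rb v ↔ Fail m' G' rb' (φ v)))
    -- failure bound on graphs with at most `n₀` nodes
    (hsmall : ∀ m, m ≤ n₀ → ∀ G : SimpleGraph (Fin m),
        (∀ v, {u | G.Adj v u}.ncard ≤ Δ) → ∀ v : Fin m,
        (Nat.card {rb : Fin m → B // Fail m G rb v} : ℝ) /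
          (Fintype.card (Fin m → B) : ℝ) ≤ 1 / (n₀ : ℝ) ^ c) :
    ∀ m : ℕ, ∀ G : SimpleGraph (Fin m),
      (∀ v, {u | G.Adj v u}.ncard ≤ Δ) → ∀ v : Fin m,
      (Nat.card {rb : Fin m → B // Fail m G rb v} : ℝ) /
        (Fintype.card (Fin m → B) : ℝ) ≤ 1 / (n₀ : ℝ) ^ c := by
  intro m G hdeg v
  set S := {x | Ball G v x (t + r)}
  let e : Fin (Nat.card S) ≃ S := (Finite.equivFin S).symm
  set j : Fin (Nat.card S) → Fin m := Subtype.val ∘ e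
  have hj : Injective j := Subtype.val_injective.comp e.injective
  have hrange : range j = S := by
    rw [range_comp, e.range_eq_univ, image_univ, Subtype.range_coe]
  have : Nonempty (Fin (Nat.card S)) := ⟨e.symm ⟨v, ball_refl v _⟩⟩
  have hcard : Nat.card S ≤ n₀ := by
    rw [Nat.card_coe_set_eq]
    exact ((ncard_ball_lt_pow hΔ hdeg v _).trans_le (by rwa [add_comm, ← add_assoc])).le
  have hdeg' : ∀ a, {u | (G.comap j).Adj a u}.ncard ≤ Δ := fun a =>
    (SimpleGraph.ncard_neighborSet_comap_le hj a).trans (hdeg (j a))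
  calc (Nat.card {rb : Fin m → B // Fail m G rb v} : ℝ) / Fintype.card (Fin m → B)
      = Nat.card {rb : Fin m → B // Fail _ (G.comap j) (rb ∘ j) (invFun j v)} /
          Fintype.card (Fin m → B) := by
        rw [Nat.card_congr (Equiv.subtypeEquivRight fun rb =>
          IsBallLocal.fail_iff_comap hlocal (leftInverse_invFun hj) hrange rb)]
    _ = Nat.card {g // Fail _ (G.comap j) g (invFun j v)} / Fintype.card (Fin _ → B) :=
        card_subtype_comp_div_card hj fun g => Fail _ (G.comap j) g (invFun j v)
    _ ≤ 1 / (n₀ : ℝ) ^ c := hsmall _ hcard _ hdeg' _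

/-- If a randomized local algorithm with runtime `t` (whose per-node failure predicate
depends only on the radius-`(t+r)` neighborhood, including random bits) fails at every node
of every graph with at most `n₀` nodes and maximum degree `Δ` with probability at most
`1/n₀^c`, and `Δ^(1+t+r) ≤ n₀`, then the same local failure bound holds on graphs of
maximum degree `Δ` of arbitrary size. -/
theorem local_failure_probability_transfer
    (Δ r t c n₀ : ℕ) (hΔ : 2 ≤ Δ) (hr : 1 ≤ r) (hc : 1 ≤ c)
    (hsize : Δ ^ (1 + t + r) ≤ n₀)
    (B : Type) [Fintype B] [Nonempty B]
    (Fail : ∀ m : ℕ, SimpleGraph (Fin m) → (Fin m → B) → Fin m → Prop)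
    -- locality: the failure event at `v` only depends on the radius-`(t+r)` neighborhood
    -- of `v` (graph structure and random bits), up to embeddings of that neighborhood
    (hlocal : ∀ (m m' : ℕ) (G : SimpleGraph (Fin m)) (G' : SimpleGraph (Fin m'))
        (φ : Fin m → Fin m') (v : Fin m) (rb : Fin m → B) (rb' : Fin m' → B),
        (∀ x y : Fin m, Ball G v x (t + r) → Ball G v y (t + r) →
            ((G.Adj x y ↔ G'.Adj (φ x) (φ y)) ∧ (φ x = φ y → x = y))) →
        (∀ x, Ball G v x (t + r) → rb' (φ x) = rb x) →
        (∀ x' : Fin m', Ball G' (φ v) x' (t + r) →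
            ∃ x, Ball G v x (t + r) ∧ φ x = x') →
        (Fail m G rb v ↔ Fail m' G' rb' (φ v)))
    -- failure bound on graphs with at most `n₀` nodes
    (hsmall : ∀ m, m ≤ n₀ → ∀ G : SimpleGraph (Fin m),
        (∀ v, {u | G.Adj v u}.ncard ≤ Δ) → ∀ v : Fin m,
        (Nat.card {rb : Fin m → B // Fail m G rb v} : ℝ) /
          (Fintype.card (Fin m → B) : ℝ) ≤ 1 / (n₀ : ℝ) ^ c) :
    ∀ m : ℕ, ∀ G : SimpleGraph (Fin m),
      (∀ v, {u | G.Adj v u}.ncard ≤ Δ) → ∀ v : Fin m,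
      (Nat.card {rb : Fin m → B // Fail m G rb v} : ℝ) /
        (Fintype.card (Fin m → B) : ℝ) ≤ 1 / (n₀ : ℝ) ^ c :=
  local_failure_probability_transfer_general Δ r t c n₀ hΔ hsize B Fail hlocal hsmall
end

section
/- In the rooted-tree label-set propagation algorithm, if the LCL Π (in the black-white formalism) is solvable on the tree by some global labeling φ, then for every non-root node u with parent v, the label φ({u,v}) belongs to the label-set L_{v,u} computed bottom-up; consequently the root can always choose labels satisfying its constraint, and the top-down phase yields a valid solution. -/
/-- **Correctness of bottom-up label-set propagation on a rooted tree.** `parent` is the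
parent map of a finite rooted tree (`parent root = root`, every node reaches the root).
`P v l g` is the constraint of node `v` given the label `l` of its parent edge (`none` for
the root) and the labels `g` of its child edges. `Lset` is the bottom-up family of
label-sets, characterized by the fixpoint property `hL`. If `φ` is a valid global edge
labeling, then `φ v ∈ Lset v` for every non-root node `v`, and consequently the root can
choose labels from the received label-sets satisfying its own constraint. -/
theorem labelset_propagation
    {V : Type*} [Fintype V] [DecidableEq V] {Lab : Type*}
    (root : V) (parent : V → V) (hroot : parent root = root)
    (hwf : ∀ v, ∃ k, parent^[k] v = root)
    (P : (v : V) → Option Lab → ({u : V // parent u = v ∧ u ≠ root} → Lab) → Prop)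
    (Lset : V → Set Lab)
    (hL : ∀ (v : V) (l : Lab), l ∈ Lset v ↔
      ∃ g : {u : V // parent u = v ∧ u ≠ root} → Lab,
        (∀ u, g u ∈ Lset u.1) ∧ P v (some l) g)
    (φ : V → Lab)
    (hvalid : ∀ v : V,
      P v (if v = root then none else some (φ v)) (fun u => φ u.1)) :
    (∀ v : V, v ≠ root → φ v ∈ Lset v) ∧
    ∃ g : {u : V // parent u = root ∧ u ≠ root} → Lab,
      (∀ u, g u ∈ Lset u.1) ∧ P root none g := by
  classical
  set m : V → ℕ := fun v => Nat.find (hwf v) with hm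
  have hmspec : ∀ v, parent^[m v] v = root := fun v => Nat.find_spec (hwf v)
  have hmmin : ∀ v k, k < m v → parent^[k] v ≠ root :=
    fun v k hk => Nat.find_min (hwf v) hk
  -- iterates up to m v are injective
  have key : ∀ (v : V) (i j : ℕ), i < j → j ≤ m v →
      parent^[i] v = parent^[j] v → False := by
    intro v i j hlt hj hij
    have h1 : parent^[m v - j + i] v = root := by
      have h2 : parent^[m v - j] (parent^[j] v) = root := by
        rw [← Function.iterate_add_apply, Nat.sub_add_cancel hj]
        exact hmspec v
      rw [← hij] at h2
      simpa [← Function.iterate_add_apply] using h2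
    exact hmmin v (m v - j + i) (by omega) h1
  have hinj : ∀ v : V, Function.Injective (fun i : Fin (m v + 1) => parent^[(i : ℕ)] v) := by
    intro v i j hij
    simp only at hij
    rcases lt_trichotomy (i : ℕ) (j : ℕ) with h | h | h
    · exact absurd (key v i j h (Nat.lt_succ_iff.mp j.2) hij) (fun h => h)
    · exact Fin.ext h
    · exact absurd (key v j i h (Nat.lt_succ_iff.mp i.2) hij.symm) (fun h => h)
  have hbound : ∀ v, m v < Fintype.card V := by
    intro v
    have := Fintype.card_le_of_injective _ (hinj v)
    simpa using this
  -- children's measure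
  have hchild : ∀ u v : V, parent u = v → u ≠ root → m u = m v + 1 := by
    intro u v hpu hu
    have h0 : 0 < m u := by
      rcases Nat.eq_zero_or_pos (m u) with h | h
      · exfalso; apply hu; have := hmspec u; rw [h] at this; simpa using this
      · exact h
    have h1 : parent^[m u - 1] v = root := by
      have := hmspec u
      rw [show m u = (m u - 1) + 1 by omega] at this
      rw [Function.iterate_add_apply] at this
      simpa [hpu] using this
    have hle : m v ≤ m u - 1 := by
      by_contra hlt
      exact hmmin v (m u - 1) (by omega) h1
    have hge : m u ≤ m v + 1 := by
      by_contra hlt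
      apply hmmin u (m v + 1) (by omega)
      rw [Function.iterate_add_apply]
      simp [hpu, hmspec v]
    omega
  have main : ∀ n : ℕ, ∀ v : V, Fintype.card V - m v ≤ n → v ≠ root → φ v ∈ Lset v := by
    intro n
    induction n with
    | zero =>
      intro v h hv
      exact absurd h (by have := hbound v; omega)
    | succ n ih =>
      intro v h hv
      rw [hL]
      refine ⟨fun u => φ u.1, fun u => ?_, by simpa [hv] using hvalid v⟩
      have hmu : m u.1 = m v + 1 := hchild u.1 v u.2.1 u.2.2
      exact ih u.1 (by have := hbound v; omega) u.2.2
  have main' : ∀ v : V, v ≠ root → φ v ∈ Lset v :=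
    fun v hv => main (Fintype.card V) v (by omega) hv
  refine ⟨main', fun u => φ u.1, fun u => main' u.1 u.2.2, ?_⟩
  simpa using hvalid root
end
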